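/- Let S be a centrally symmetric simplicial complex with free involution σ and suppose its vertex set decomposes as V(S) = W ⊎ σ(W). Fix any locally acyclic orientation on the induced subcomplex S_W, give the induced subcomplex S_{σ(W)} the reversed orientation under σ (σ(u) → σ(w) iff w → u), and orient every edge between W and σ(W) from its W-endpoint to its σ(W)-endpoint. Then the resulting orientation of S is locally acyclic and satisfies: u → w if and only if σ(w) → σ(u), for every edge {u,w} of S. -/
import Mathlib


open Finset

variable {V : Type*} [DecidableEq V]

def IsSimplicialComplex (Δ : Set (Finset V)) : Prop :=
  ∅ ∈ Δ ∧ ∀ F ∈ Δ, ∀ G ⊆ F, G ∈ Δ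

/-- Let `S` be a centrally symmetric simplicial complex whose vertex set splits
as `W ⊎ σ(W)`. Any locally acyclic orientation `o₀` of the induced subcomplex
on `W` extends to a locally acyclic orientation `o` of `S` which restricts to
`o₀` on `W`, is the `σ`-reversed orientation on `σ(W)`, orients every edge
between `W` and `σ(W)` from `W` to `σ(W)`, and is order reversing:
`u → w` iff `σ w → σ u`. -/
theorem symmetric_locally_acyclic_orientation
    (S : Set (Finset V)) (σ : V → V) (W : Set V) (o₀ : V → V → Prop)
    (hS : IsSimplicialComplex S)
    (hinv : ∀ v, σ (σ v) = v)
    (hface : ∀ F ∈ S, F.image σ ∈ S)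
    (hfree : ∀ F ∈ S, F ≠ ∅ → F.image σ ≠ F)
    (hpart : ∀ v : V, {v} ∈ S → (v ∈ W ↔ σ v ∉ W))
    (ho₀orient : ∀ u w : V, u ∈ W → w ∈ W → ({u, w} : Finset V) ∈ S → u ≠ w →
      ((o₀ u w ∨ o₀ w u) ∧ ¬ (o₀ u w ∧ o₀ w u)))
    (ho₀lao : ∀ a b c : V, a ∈ W → b ∈ W → c ∈ W →
      ({a, b, c} : Finset V) ∈ S → a ≠ b → b ≠ c → a ≠ c →
      ¬ (o₀ a b ∧ o₀ b c ∧ o₀ c a)) :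
    ∃ o : V → V → Prop,
      (∀ u w : V, u ∈ W → w ∈ W → ({u, w} : Finset V) ∈ S → u ≠ w →
        (o u w ↔ o₀ u w)) ∧
      (∀ u w : V, u ∉ W → w ∉ W → ({u, w} : Finset V) ∈ S → u ≠ w →
        (o u w ↔ o₀ (σ w) (σ u))) ∧
      (∀ u w : V, u ∈ W → w ∉ W → ({u, w} : Finset V) ∈ S →
        o u w ∧ ¬ o w u) ∧
      (∀ u w : V, ({u, w} : Finset V) ∈ S → u ≠ w →
        ((o u w ∨ o w u) ∧ ¬ (o u w ∧ o w u))) ∧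
      (∀ a b c : V, ({a, b, c} : Finset V) ∈ S → a ≠ b → b ≠ c → a ≠ c →
        ¬ (o a b ∧ o b c ∧ o c a)) ∧
      (∀ u w : V, ({u, w} : Finset V) ∈ S → u ≠ w →
        (o u w ↔ o (σ w) (σ u))) := by
  classical
  -- injectivity of σ
  have hinj : Function.Injective σ := fun a b h => by
    have := congrArg σ h; rwa [hinv, hinv] at this
  -- vertices of faces are in S
  have hvert : ∀ F ∈ S, ∀ v ∈ F, ({v} : Finset V) ∈ S := by
    intro F hF v hv
    exact hS.2 F hF {v} (by simpa using hv)
  have hvσ : ∀ v : V, ({v} : Finset V) ∈ S → ({σ v} : Finset V) ∈ S := by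
    intro v hv
    have := hface _ hv
    simpa using this
  have hpart' : ∀ v : V, ({v} : Finset V) ∈ S → (v ∉ W ↔ σ v ∈ W) := by
    intro v hv
    have h1 := hpart v hv
    have h2 := hpart (σ v) (hvσ v hv)
    rw [hinv] at h2
    constructor
    · intro h; by_contra h'; exact h' (h2.mpr h)
    · intro h h'; exact (h1.mp h') h
  set o : V → V → Prop := fun u w =>
    (u ∈ W ∧ w ∈ W ∧ o₀ u w) ∨ (u ∉ W ∧ w ∉ W ∧ o₀ (σ w) (σ u)) ∨
      (u ∈ W ∧ w ∉ W) with ho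
  have oWW : ∀ u w : V, u ∈ W → w ∈ W → (o u w ↔ o₀ u w) := by
    intro u w hu hw
    simp only [ho]
    tauto
  have oNN : ∀ u w : V, u ∉ W → w ∉ W → (o u w ↔ o₀ (σ w) (σ u)) := by
    intro u w hu hw
    simp only [ho]
    tauto
  have oWN : ∀ u w : V, u ∈ W → w ∉ W → (o u w ∧ ¬ o w u) := by
    intro u w hu hw
    simp only [ho]
    tauto
  refine ⟨o, fun u w hu hw _ _ => oWW u w hu hw,
    fun u w hu hw _ _ => oNN u w hu hw,
    fun u w hu hw _ => oWN u w hu hw, ?_, ?_, ?_⟩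
  · -- totality / asymmetry
    intro u w hedge hne
    have hu : ({u} : Finset V) ∈ S := hvert _ hedge u (by simp)
    have hw : ({w} : Finset V) ∈ S := hvert _ hedge w (by simp)
    by_cases huW : u ∈ W <;> by_cases hwW : w ∈ W
    · have := ho₀orient u w huW hwW hedge hne
      rw [oWW u w huW hwW, oWW w u hwW huW]
      exact this
    · have h := oWN u w huW hwW
      exact ⟨Or.inl h.1, fun hh => h.2 hh.2⟩
    · have h := oWN w u hwW huW
      exact ⟨Or.inr h.1, fun hh => h.2 hh.1⟩
    · have hσu : σ u ∈ W := (hpart' u hu).mp huW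
      have hσw : σ w ∈ W := (hpart' w hw).mp hwW
      have hedgeσ : ({σ u, σ w} : Finset V) ∈ S := by
        have := hface _ hedge
        simpa [Finset.image_insert] using this
      have hσne : σ u ≠ σ w := fun h => hne (hinj h)
      have := ho₀orient (σ w) (σ u) hσw hσu
        (by rwa [Finset.pair_comm]) hσne.symm
      rw [oNN u w huW hwW, oNN w u hwW huW]
      tauto
  · -- local acyclicity
    intro a b c htri hab hbc hac hcyc
    have ha : ({a} : Finset V) ∈ S := hvert _ htri a (by simp)
    have hb : ({b} : Finset V) ∈ S := hvert _ htri b (by simp)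
    have hc : ({c} : Finset V) ∈ S := hvert _ htri c (by simp)
    -- o x y implies (y ∈ W → x ∈ W)
    have key : ∀ x y : V, o x y → y ∈ W → x ∈ W := by
      intro x y hxy hyW
      rcases hxy with ⟨h, _⟩ | ⟨_, h, _⟩ | ⟨_, h⟩
      · exact h
      · exact absurd hyW h
      · exact absurd hyW h
    obtain ⟨oab, obc, oca⟩ := hcyc
    by_cases haW : a ∈ W
    · have hcW : c ∈ W := key c a oca haW
      have hbW : b ∈ W := key b c obc hcW
      exact ho₀lao a b c haW hbW hcW htri hab hbc hac
        ⟨(oWW a b haW hbW).mp oab, (oWW b c hbW hcW).mp obc,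
          (oWW c a hcW haW).mp oca⟩
    · have hbW : b ∉ W := fun hbW => haW (key a b oab hbW)
      have hcW : c ∉ W := fun hcW => hbW (key b c obc hcW)
      have hσa : σ a ∈ W := (hpart' a ha).mp haW
      have hσb : σ b ∈ W := (hpart' b hb).mp hbW
      have hσc : σ c ∈ W := (hpart' c hc).mp hcW
      have htriσ : ({σ a, σ c, σ b} : Finset V) ∈ S := by
        have := hface _ htri
        simp only [Finset.image_insert, Finset.image_singleton] at this
        have heq : ({σ a, σ c, σ b} : Finset V) = {σ a, σ b, σ c} := by
          ext x; simp; tauto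
        rwa [heq]
      exact ho₀lao (σ a) (σ c) (σ b) hσa hσc hσb htriσ
        (fun h => hac (hinj h)) (fun h => hbc (hinj h).symm)
        (fun h => hab (hinj h))
        ⟨(oNN c a hcW haW).mp oca, (oNN b c hbW hcW).mp obc,
          (oNN a b haW hbW).mp oab⟩
  · -- symmetry
    intro u w hedge hne
    have hu : ({u} : Finset V) ∈ S := hvert _ hedge u (by simp)
    have hw : ({w} : Finset V) ∈ S := hvert _ hedge w (by simp)
    by_cases huW : u ∈ W <;> by_cases hwW : w ∈ W
    · have hσu : σ u ∉ W := (hpart u hu).mp huW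
      have hσw : σ w ∉ W := (hpart w hw).mp hwW
      rw [oWW u w huW hwW, oNN (σ w) (σ u) hσw hσu, hinv, hinv]
    · have hσu : σ u ∉ W := (hpart u hu).mp huW
      have hσw : σ w ∈ W := (hpart' w hw).mp hwW
      have h1 := oWN u w huW hwW
      have h2 := oWN (σ w) (σ u) hσw hσu
      constructor <;> intro <;> [exact h2.1; exact h1.1]
    · have hσu : σ u ∈ W := (hpart' u hu).mp huW
      have hσw : σ w ∉ W := (hpart w hw).mp hwW
      have h1 := oWN w u hwW huW
      have h2 := oWN (σ u) (σ w) hσu hσw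
      constructor <;> intro h
      · exact absurd h h1.2
      · exact absurd h h2.2
    · have hσu : σ u ∈ W := (hpart' u hu).mp huW
      have hσw : σ w ∈ W := (hpart' w hw).mp hwW
      rw [oNN u w huW hwW, oWW (σ w) (σ u) hσw hσu]
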